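/- arXiv:1808.08893 — 5 statements merged into one kernel-verified Lean document; each statement's English description precedes it below -/
import Mathlib

section
/- For any well-formed parsing expression φ, if the empty string ε̂ is in L(φ) then the weak nullability predicate λ(φ) holds. -/
namespace PEG

variable {N σ : Type}

/-- Parsing expressions. -/
inductive PExp (N σ : Type) where
  | chr (a : σ)
  | eps
  | fail
  | nt (A : N)
  | neg (α : PExp N σ)
  | seq (α β : PExp N σ)
  | alt (α β : PExp N σ)

/-- Big-step PEG semantics: `Eval R φ s r` means `φ(s) = r`
(`none` = fail, `some s'` = matched leaving suffix `s'`). -/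
inductive Eval (R : N → PExp N σ) : PExp N σ → List σ → Option (List σ) → Prop where
  | chr_succ (a : σ) (s : List σ) : Eval R (.chr a) (a :: s) (some s)
  | chr_fail (a : σ) (s : List σ) : (∀ s', s ≠ a :: s') → Eval R (.chr a) s none
  | eps (s : List σ) : Eval R .eps s (some s)
  | fail (s : List σ) : Eval R .fail s none
  | nt (A : N) (s : List σ) (r : Option (List σ)) :
      Eval R (R A) s r → Eval R (.nt A) s r
  | neg_succ (α : PExp N σ) (s : List σ) :
      Eval R α s none → Eval R (.neg α) s (some s)
  | neg_fail (α : PExp N σ) (s s' : List σ) :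
      Eval R α s (some s') → Eval R (.neg α) s none
  | seq_succ (α β : PExp N σ) (s s' : List σ) (r : Option (List σ)) :
      Eval R α s (some s') → Eval R β s' r → Eval R (.seq α β) s r
  | seq_fail (α β : PExp N σ) (s : List σ) :
      Eval R α s none → Eval R (.seq α β) s none
  | alt_succ (α β : PExp N σ) (s s' : List σ) :
      Eval R α s (some s') → Eval R (.alt α β) s (some s')
  | alt_fail (α β : PExp N σ) (s : List σ) (r : Option (List σ)) :
      Eval R α s none → Eval R β s r → Eval R (.alt α β) s r

/-- The language of a parsing expression. -/
def Lang (R : N → PExp N σ) (φ : PExp N σ) : Set (List σ) :=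
  {s | ∃ s', Eval R φ s (some s')}

/-- Nullability predicate ν (least fixed point). -/
inductive Nu (R : N → PExp N σ) : PExp N σ → Prop where
  | eps : Nu R .eps
  | nt (A : N) : Nu R (R A) → Nu R (.nt A)
  | seq (α β : PExp N σ) : Nu R α → Nu R β → Nu R (.seq α β)
  | altl (α β : PExp N σ) : Nu R α → Nu R (.alt α β)
  | altr (α β : PExp N σ) : Nu R β → Nu R (.alt α β)

/-- Weak nullability predicate λ (least fixed point). -/
inductive Lam (R : N → PExp N σ) : PExp N σ → Prop where
  | eps : Lam R .eps
  | nt (A : N) : Lam R (R A) → Lam R (.nt A)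
  | neg (α : PExp N σ) : Lam R (.neg α)
  | seq (α β : PExp N σ) : Lam R α → Lam R β → Lam R (.seq α β)
  | altl (α β : PExp N σ) : Lam R α → Lam R (.alt α β)
  | altr (α β : PExp N σ) : Lam R β → Lam R (.alt α β)

/-- One step of left-expansion: `LEStep R φ γ` iff `γ ∈ LE(φ)`. -/
inductive LEStep (R : N → PExp N σ) : PExp N σ → PExp N σ → Prop where
  | nt (A : N) : LEStep R (.nt A) (R A)
  | neg (α : PExp N σ) : LEStep R (.neg α) α
  | seq1 (α β : PExp N σ) : LEStep R (.seq α β) α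
  | seq2 (α β : PExp N σ) : Lam R α → LEStep R (.seq α β) β
  | alt1 (α β : PExp N σ) : LEStep R (.alt α β) α
  | alt2 (α β : PExp N σ) : LEStep R (.alt α β) β

/-- One step of the immediate subexpression function SUB. -/
inductive SubStep (R : N → PExp N σ) : PExp N σ → PExp N σ → Prop where
  | nt (A : N) : SubStep R (.nt A) (R A)
  | neg (α : PExp N σ) : SubStep R (.neg α) α
  | seq1 (α β : PExp N σ) : SubStep R (.seq α β) α
  | seq2 (α β : PExp N σ) : SubStep R (.seq α β) β
  | alt1 (α β : PExp N σ) : SubStep R (.alt α β) α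
  | alt2 (α β : PExp N σ) : SubStep R (.alt α β) β

/-- LE⁺(φ): the transitive closure of left-expansion. -/
def LEPlus (R : N → PExp N σ) (φ : PExp N σ) : Set (PExp N σ) :=
  {γ | Relation.TransGen (LEStep R) φ γ}

/-- SUB⁺(φ): the transitive closure of the subexpression function. -/
def SubPlus (R : N → PExp N σ) (φ : PExp N σ) : Set (PExp N σ) :=
  {γ | Relation.TransGen (SubStep R) φ γ}

/-- A parsing expression is well-formed if no expression in {φ} ∪ SUB⁺(φ)
left-recursively expands itself. -/
def WellFormed (R : N → PExp N σ) (φ : PExp N σ) : Prop :=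
  ∀ γ, (γ = φ ∨ γ ∈ SubPlus R φ) → γ ∉ LEPlus R γ

end PEG

/-! Induct on the evaluation derivation. An expression that succeeds on `s` leaving `s` itself
consumes nothing, and since every result is a suffix of its input, neither does any subexpression
on the success path; each rule such a derivation can use (`eps`, `neg_succ`, `nt`, `seq_succ`,
`alt_succ`, `alt_fail`) has a matching constructor of `Lam`. -/

namespace PEG.Eval

variable {N σ : Type} {R : N → PExp N σ}

theorem suffix {φ : PExp N σ} {s s' : List σ} (h : Eval R φ s (some s')) : s' <:+ s := by
  generalize hr : some s' = r at h
  induction h generalizing s' with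
  | chr_succ a t => cases hr; exact List.suffix_cons a t
  | eps | neg_succ => cases hr; exact List.suffix_refl _
  | chr_fail | fail | neg_fail | seq_fail => cases hr
  | nt _ _ _ _ ih | alt_succ _ _ _ _ _ ih | alt_fail _ _ _ _ _ _ _ ih => exact ih hr
  | seq_succ _ _ _ _ _ _ _ ih₁ ih₂ => exact (ih₂ hr).trans (ih₁ rfl)

theorem lam_of_eval_self {φ : PExp N σ} {s : List σ} (h : Eval R φ s (some s)) :
    Lam R φ := by
  suffices ∀ {r}, Eval R φ s r → r = some s → Lam R φ from this h rfl
  clear h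
  intro r h hr
  induction h with
  | eps => exact .eps
  | neg_succ => exact .neg _
  | chr_succ | chr_fail | fail | neg_fail | seq_fail => cases hr
  | nt _ _ _ _ ih => exact .nt _ (ih hr)
  | alt_succ _ _ _ _ _ ih => exact .altl _ _ (ih hr)
  | alt_fail _ _ _ _ _ _ _ ih => exact .altr _ _ (ih hr)
  | seq_succ _ _ s t _ h₁ h₂ ih₁ ih₂ =>
    cases hr
    have hts : t = s := (suffix h₁).eq_of_length
      (le_antisymm (suffix h₁).length_le (suffix h₂).length_le)
    subst hts
    exact .seq _ _ (ih₁ rfl) (ih₂ rfl)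

end PEG.Eval

theorem weak_nullability_general {N σ : Type} (R : N → PEG.PExp N σ) (φ : PEG.PExp N σ)
    (h : ([] : List σ) ∈ PEG.Lang R φ) :
    PEG.Lam R φ := by
  obtain ⟨s', hs⟩ := h
  obtain rfl : s' = [] := List.eq_nil_of_suffix_nil hs.suffix
  exact hs.lam_of_eval_self

/-- For any well-formed parsing expression φ, if the empty string
is in L(φ) then λ(φ) holds. -/
theorem weak_nullability {N σ : Type} (R : N → PEG.PExp N σ) (φ : PEG.PExp N σ)
    (hwf : PEG.WellFormed R φ) (h : ([] : List σ) ∈ PEG.Lang R φ) :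
    PEG.Lam R φ :=
  weak_nullability_general R φ h
end

section
/- Normalization preserves semantics: for any well-formed, un-normalized parsing expression φ and string s = s_{k+1}s_{k+2}…s_{k+n}, φ(s) = [φ]_k(s). -/
namespace PEG

variable {N σ : Type}

/-- Annotated parsing expressions: `eps j` is ε_j, `neg j α` is !_jα, and
`seq α β fs` is αβ[fs] where `fs` is the list of lookahead followers
(pairs of an index `j` and the repeated derivative β_j of β from index j). -/
inductive AExp (N σ : Type) where
  | chr (a : σ)
  | eps (j : ℕ)
  | fail
  | neg (j : ℕ) (α : AExp N σ)
  | seq (α : AExp N σ) (β : PExp N σ) (fs : List (ℕ × AExp N σ))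
  | alt (α β : AExp N σ)

/-- `BackMem φ j` iff `j ∈ back(φ)`. -/
inductive BackMem : AExp N σ → ℕ → Prop where
  | eps (j : ℕ) : BackMem (.eps j) j
  | neg (j : ℕ) (α : AExp N σ) : BackMem (.neg j α) j
  | seq (α : AExp N σ) (β : PExp N σ) (fs : List (ℕ × AExp N σ)) (j : ℕ) (γ : AExp N σ) (m : ℕ) :
      (j, γ) ∈ fs → BackMem γ m → BackMem (.seq α β fs) m
  | altl (α β : AExp N σ) (m : ℕ) : BackMem α m → BackMem (.alt α β) m
  | altr (α β : AExp N σ) (m : ℕ) : BackMem β m → BackMem (.alt α β) m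

/-- `MatchMem φ j` iff `j ∈ match(φ)`. -/
inductive MatchMem : AExp N σ → ℕ → Prop where
  | eps (j : ℕ) : MatchMem (.eps j) j
  | seq (α : AExp N σ) (β : PExp N σ) (fs : List (ℕ × AExp N σ)) (j : ℕ) (γ : AExp N σ) (m : ℕ) :
      MatchMem α j → (j, γ) ∈ fs → MatchMem γ m → MatchMem (.seq α β fs) m
  | alt (α β : AExp N σ) (m : ℕ) : MatchMem β m → MatchMem (.alt α β) m

/-- The normalization relation: `Norm R i φ ψ` means `[φ]_i = ψ`. -/
inductive Norm (R : N → PExp N σ) : ℕ → PExp N σ → AExp N σ → Prop where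
  | chr (i : ℕ) (a : σ) : Norm R i (.chr a) (.chr a)
  | eps (i : ℕ) : Norm R i .eps (.eps i)
  | fail (i : ℕ) : Norm R i .fail .fail
  | nt (i : ℕ) (A : N) (ψ : AExp N σ) : Norm R i (R A) ψ → Norm R i (.nt A) ψ
  | neg (i : ℕ) (α : PExp N σ) (ψ : AExp N σ) :
      Norm R i α ψ → Norm R i (.neg α) (.neg i ψ)
  | seq_lam (i : ℕ) (α β : PExp N σ) (ψ χ : AExp N σ) : Lam R β →
      Norm R i α ψ → Norm R i β χ → Norm R i (.seq α β) (.seq ψ β [(i, χ)])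
  | seq_nolam (i : ℕ) (α β : PExp N σ) (ψ : AExp N σ) : ¬ Lam R β →
      Norm R i α ψ → Norm R i (.seq α β) (.seq ψ β [])
  | alt (i : ℕ) (α β : PExp N σ) (ψ χ : AExp N σ) :
      Norm R i α ψ → Norm R i β χ → Norm R i (.alt α β) (.alt ψ χ)

/-- Normalized annotated expressions: every sequence expression has a
functional follower list whose index set equals `back` of its first component. -/
inductive ANorm (R : N → PExp N σ) : AExp N σ → Prop where
  | chr (a : σ) : ANorm R (.chr a)
  | eps (j : ℕ) : ANorm R (.eps j)
  | fail : ANorm R .fail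
  | neg (j : ℕ) (α : AExp N σ) : ANorm R α → ANorm R (.neg j α)
  | seq (α : AExp N σ) (β : PExp N σ) (fs : List (ℕ × AExp N σ)) :
      ANorm R α → (∀ p ∈ fs, ANorm R p.2) →
      (∀ j, (∃ γ, (j, γ) ∈ fs) ↔ BackMem α j) →
      (∀ j γ γ', (j, γ) ∈ fs → (j, γ') ∈ fs → γ = γ') →
      ANorm R (.seq α β fs)
  | alt (α β : AExp N σ) : ANorm R α → ANorm R β → ANorm R (.alt α β)

/-- All annotation indices of the expression are at most `k`. -/
inductive IdxLE (k : ℕ) : AExp N σ → Prop where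
  | chr (a : σ) : IdxLE k (.chr a)
  | eps (j : ℕ) : j ≤ k → IdxLE k (.eps j)
  | fail : IdxLE k .fail
  | neg (j : ℕ) (α : AExp N σ) : j ≤ k → IdxLE k α → IdxLE k (.neg j α)
  | seq (α : AExp N σ) (β : PExp N σ) (fs : List (ℕ × AExp N σ)) :
      IdxLE k α → (∀ p ∈ fs, p.1 ≤ k) → (∀ p ∈ fs, IdxLE k p.2) → IdxLE k (.seq α β fs)
  | alt (α β : AExp N σ) : IdxLE k α → IdxLE k β → IdxLE k (.alt α β)

/-- `φ` is `k`-normalized. -/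
def KNorm (R : N → PExp N σ) (k : ℕ) (φ : AExp N σ) : Prop :=
  ANorm R φ ∧ IdxLE k φ

/-- Semantics of annotated expressions over the full input `w`.
Positions count consumed characters, so position `p` corresponds to the
input suffix after index `p`, i.e. `w.drop p`.  `AEval R w φ k r` means
`φ(s^k) = r` where `s^k = w.drop k` (`r = none` is `fail`, `r = some p`
is the suffix `w.drop p`). -/
inductive AEval (R : N → PExp N σ) (w : List σ) : AExp N σ → ℕ → Option ℕ → Prop where
  | chr_succ (a : σ) (k : ℕ) : w[k]? = some a → AEval R w (.chr a) k (some (k+1))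
  | chr_fail (a : σ) (k : ℕ) : w[k]? ≠ some a → AEval R w (.chr a) k none
  | eps (j k : ℕ) : AEval R w (.eps j) k (some j)
  | fail (k : ℕ) : AEval R w .fail k none
  | neg_succ (j : ℕ) (α : AExp N σ) (k : ℕ) :
      AEval R w α k none → AEval R w (.neg j α) k (some j)
  | neg_fail (j : ℕ) (α : AExp N σ) (k m : ℕ) :
      AEval R w α k (some m) → AEval R w (.neg j α) k none
  | seq_succ (α : AExp N σ) (β : PExp N σ) (fs : List (ℕ × AExp N σ)) (k m : ℕ) (s' : List σ) :
      AEval R w α k (some m) → Eval R β (w.drop m) (some s') →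
      AEval R w (.seq α β fs) k (some (w.length - s'.length))
  | seq_fail1 (α : AExp N σ) (β : PExp N σ) (fs : List (ℕ × AExp N σ)) (k : ℕ) :
      AEval R w α k none → AEval R w (.seq α β fs) k none
  | seq_fail2 (α : AExp N σ) (β : PExp N σ) (fs : List (ℕ × AExp N σ)) (k m : ℕ) :
      AEval R w α k (some m) → Eval R β (w.drop m) none →
      AEval R w (.seq α β fs) k none
  | alt_succ (α β : AExp N σ) (k m : ℕ) :
      AEval R w α k (some m) → AEval R w (.alt α β) k (some m)
  | alt_fail (α β : AExp N σ) (k : ℕ) (r : Option ℕ) :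
      AEval R w α k none → AEval R w β k r → AEval R w (.alt α β) k r

/-- The derivative step `d_{c,i}` as a relation: `Deriv R c i φ ψ` means
`d_{c,i}(φ) = ψ`.  Here `c : Option σ`, with `none` standing for the
end-of-string terminal `#`. -/
inductive Deriv (R : N → PExp N σ) : Option σ → ℕ → AExp N σ → AExp N σ → Prop where
  | chr_eq (a : σ) (i : ℕ) : Deriv R (some a) i (.chr a) (.eps i)
  | chr_ne (c : Option σ) (i : ℕ) (a : σ) : c ≠ some a → Deriv R c i (.chr a) .fail
  | eps (c : Option σ) (i j : ℕ) : Deriv R c i (.eps j) (.eps j)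
  | fail (c : Option σ) (i : ℕ) : Deriv R c i .fail .fail
  | neg_match (c : Option σ) (i j : ℕ) (α α' : AExp N σ) (m : ℕ) :
      Deriv R c i α α' → MatchMem α' m → Deriv R c i (.neg j α) .fail
  | neg_fail (c : Option σ) (i j : ℕ) (α : AExp N σ) :
      Deriv R c i α .fail → Deriv R c i (.neg j α) (.eps j)
  | neg_other (c : Option σ) (i j : ℕ) (α α' : AExp N σ) :
      Deriv R c i α α' → (∀ m, ¬ MatchMem α' m) → α' ≠ .fail →
      Deriv R c i (.neg j α) (.neg j α')
  | seq_fail (c : Option σ) (i : ℕ) (α : AExp N σ) (β : PExp N σ) (fs : List (ℕ × AExp N σ)) :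
      Deriv R c i α .fail → Deriv R c i (.seq α β fs) .fail
  | seq_eps_i (a : σ) (i : ℕ) (α : AExp N σ) (β : PExp N σ) (fs : List (ℕ × AExp N σ)) (χ : AExp N σ) :
      Deriv R (some a) i α (.eps i) → Norm R i β χ →
      Deriv R (some a) i (.seq α β fs) χ
  | seq_eps_i_end (i : ℕ) (α : AExp N σ) (β : PExp N σ) (fs : List (ℕ × AExp N σ)) (χ χ' : AExp N σ) :
      Deriv R none i α (.eps i) → Norm R i β χ → Deriv R none i χ χ' →
      Deriv R none i (.seq α β fs) χ'
  | seq_eps_j (c : Option σ) (i j : ℕ) (α : AExp N σ) (β : PExp N σ)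
      (fs : List (ℕ × AExp N σ)) (γ γ' : AExp N σ) :
      Deriv R c i α (.eps j) → j < i → (j, γ) ∈ fs → Deriv R c i γ γ' →
      Deriv R c i (.seq α β fs) γ'
  | seq_other (c : Option σ) (i : ℕ) (α : AExp N σ) (β : PExp N σ)
      (fs : List (ℕ × AExp N σ)) (α' : AExp N σ) (fs' : List (ℕ × AExp N σ)) :
      Deriv R c i α α' → α' ≠ .fail → (∀ j, α' ≠ .eps j) →
      (∀ j, (∃ γ', (j, γ') ∈ fs') ↔ BackMem α' j) →
      (∀ j γ' γ'', (j, γ') ∈ fs' → (j, γ'') ∈ fs' → γ' = γ'') →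
      (∀ γ', (i, γ') ∈ fs' → Norm R i β γ') →
      (∀ j, j < i → (∃ γ', (j, γ') ∈ fs') → ∃ γ, (j, γ) ∈ fs) →
      (∀ j γ γ', j < i → (j, γ) ∈ fs → (j, γ') ∈ fs' → Deriv R c i γ γ') →
      Deriv R c i (.seq α β fs) (.seq α' β fs')
  | alt_fail_l (c : Option σ) (i : ℕ) (α β α' β' : AExp N σ) :
      Deriv R c i α .fail → Deriv R c i β β' → Deriv R c i (.alt α β) β'
  | alt_take_l_match (c : Option σ) (i : ℕ) (α β α' : AExp N σ) (m : ℕ) :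
      Deriv R c i α α' → α' ≠ .fail → MatchMem α' m →
      Deriv R c i (.alt α β) α'
  | alt_take_l_bfail (c : Option σ) (i : ℕ) (α β α' : AExp N σ) :
      Deriv R c i α α' → α' ≠ .fail → Deriv R c i β .fail →
      Deriv R c i (.alt α β) α'
  | alt_other (c : Option σ) (i : ℕ) (α β α' β' : AExp N σ) :
      Deriv R c i α α' → Deriv R c i β β' →
      α' ≠ .fail → β' ≠ .fail → (∀ m, ¬ MatchMem α' m) →
      Deriv R c i (.alt α β) (.alt α' β')

/-- Repeated string derivative: `DerivN R w k m φ ψ` means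
`ψ = (d_{s_m,m} ∘ ⋯ ∘ d_{s_{k+1},k+1})(φ)`, where `s_j` is the j-th
(1-indexed) character of the full input `w`. -/
inductive DerivN (R : N → PExp N σ) (w : List σ) : ℕ → ℕ → AExp N σ → AExp N σ → Prop where
  | done (k : ℕ) (φ : AExp N σ) : DerivN R w k k φ φ
  | step (k m : ℕ) (φ χ ψ : AExp N σ) (c : σ) :
      w[k]? = some c → Deriv R (some c) (k+1) φ χ → DerivN R w (k+1) m χ ψ →
      DerivN R w k m φ ψ

end PEG

/-!
Direct evaluation of an annotated expression ignores follower lists, and `[·]_k` only attaches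
annotations (`ε ↦ ε_k`, `!α ↦ !_k α`) that, evaluated from position `k`, return exactly the
suffix `w.drop k` that the plain `ε` and `!α` return. So the two semantics agree by induction on
the normalization derivation. The only bookkeeping is in sequences, where the suffix `s'` left by
the un-normalized `β` is turned back into a position: being a suffix of `w`, it is
`w.drop (w.length - s'.length)`.
-/

theorem List.drop_eq_cons_iff_getElem? {α : Type*} {l t : List α} {k : ℕ} {a : α} :
    l.drop k = a :: t ↔ l[k]? = some a ∧ t = l.drop (k + 1) := by
  constructor
  · intro h
    refine ⟨?_, by simpa using (congrArg List.tail h).symm⟩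
    simpa [h] using (List.getElem?_drop (xs := l) (i := k) (j := 0)).symm
  · rintro ⟨ha, rfl⟩
    obtain ⟨hk, rfl⟩ := List.getElem?_eq_some_iff.mp ha
    exact List.drop_eq_getElem_cons hk

namespace PEG

variable {N σ : Type} {R : N → PExp N σ}

theorem Eval.isSuffix {φ : PExp N σ} {s s' : List σ} (h : Eval R φ s (some s')) : s' <:+ s := by
  generalize hr : some s' = r at h
  induction h generalizing s' with
  | chr_succ a s => cases hr; exact List.suffix_cons a s
  | eps | neg_succ => cases hr; exact List.suffix_refl _
  | chr_fail | fail | neg_fail | seq_fail => cases hr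
  | nt _ _ _ _ ih | alt_succ _ _ _ _ _ ih | alt_fail _ _ _ _ _ _ _ ih => exact ih hr
  | seq_succ _ _ _ _ _ _ _ ih₁ ih₂ => exact (ih₂ hr).trans (ih₁ rfl)

def SemEquiv (R : N → PExp N σ) (w : List σ) (k : ℕ) (ψ : AExp N σ) (φ : PExp N σ) : Prop :=
  (AEval R w ψ k none ↔ Eval R φ (w.drop k) none) ∧
  (∀ p, AEval R w ψ k (some p) → Eval R φ (w.drop k) (some (w.drop p))) ∧
  (∀ s', Eval R φ (w.drop k) (some s') → ∃ p, s' = w.drop p ∧ AEval R w ψ k (some p))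

namespace SemEquiv

variable {w : List σ} {k : ℕ}

theorem chr (a : σ) : SemEquiv R w k (.chr a) (.chr a) := by
  refine ⟨⟨fun hψ => ?_, fun hφ => ?_⟩, fun p hψ => ?_, fun s' hφ => ?_⟩
  · cases hψ with
    | chr_fail _ _ hne =>
      exact Eval.chr_fail a _ fun s' hs => hne (List.drop_eq_cons_iff_getElem?.mp hs).1
  · generalize hs : w.drop k = s at hφ
    cases hφ with
    | chr_fail _ _ hne =>
      exact AEval.chr_fail a k fun ha => hne _ (hs ▸ List.drop_eq_cons_iff_getElem?.mpr ⟨ha, rfl⟩)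
  · cases hψ with
    | chr_succ _ _ ha =>
      rw [List.drop_eq_cons_iff_getElem?.mpr ⟨ha, rfl⟩]
      exact Eval.chr_succ a _
  · generalize hs : w.drop k = s at hφ
    cases hφ with
    | chr_succ =>
      obtain ⟨ha, rfl⟩ := List.drop_eq_cons_iff_getElem?.mp hs
      exact ⟨k + 1, rfl, AEval.chr_succ a k ha⟩

theorem eps : SemEquiv R w k (.eps k) .eps := by
  refine ⟨⟨nofun, nofun⟩, ?_, ?_⟩
  · rintro p ⟨⟩
    exact Eval.eps _
  · rintro s' ⟨⟩
    exact ⟨k, rfl, AEval.eps k k⟩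

theorem fail : SemEquiv R w k .fail .fail :=
  ⟨⟨fun _ => Eval.fail _, fun _ => AEval.fail _⟩, nofun, nofun⟩

theorem nt {ψ : AExp N σ} (A : N) (h : SemEquiv R w k ψ (R A)) : SemEquiv R w k ψ (.nt A) := by
  obtain ⟨hnone, hsome, hmatch⟩ := h
  refine ⟨⟨fun hψ => Eval.nt _ _ _ (hnone.mp hψ), fun hA => ?_⟩,
    fun p hψ => Eval.nt _ _ _ (hsome p hψ), fun s' hA => ?_⟩
  · cases hA with
    | nt _ _ _ hA => exact hnone.mpr hA
  · cases hA with
    | nt _ _ _ hA => exact hmatch s' hA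

theorem neg {ψ : AExp N σ} {α : PExp N σ} (h : SemEquiv R w k ψ α) :
    SemEquiv R w k (.neg k ψ) (.neg α) := by
  obtain ⟨hnone, hsome, hmatch⟩ := h
  refine ⟨⟨fun hψ => ?_, fun hα => ?_⟩, fun p hψ => ?_, fun s' hα => ?_⟩
  · cases hψ with
    | neg_fail _ _ _ m hψ => exact Eval.neg_fail _ _ _ (hsome m hψ)
  · cases hα with
    | neg_fail _ _ _ hα =>
      obtain ⟨p, rfl, hψ⟩ := hmatch _ hα
      exact AEval.neg_fail _ _ _ p hψ
  · cases hψ with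
    | neg_succ _ _ _ hψ => exact Eval.neg_succ _ _ (hnone.mp hψ)
  · cases hα with
    | neg_succ _ _ hα => exact ⟨k, rfl, AEval.neg_succ _ _ _ (hnone.mpr hα)⟩

theorem seq {ψ : AExp N σ} {α : PExp N σ} (β : PExp N σ) (fs : List (ℕ × AExp N σ))
    (h : SemEquiv R w k ψ α) : SemEquiv R w k (.seq ψ β fs) (.seq α β) := by
  obtain ⟨hnone, hsome, hmatch⟩ := h
  have drop_eq {m : ℕ} {s' : List σ} (hβ : Eval R β (w.drop m) (some s')) :
      w.drop (w.length - s'.length) = s' :=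
    (List.suffix_iff_eq_drop.mp (hβ.isSuffix.trans (List.drop_suffix m w))).symm
  refine ⟨⟨fun hψ => ?_, fun hα => ?_⟩, fun p hψ => ?_, fun s'' hα => ?_⟩
  · cases hψ with
    | seq_fail1 _ _ _ _ hψ => exact Eval.seq_fail _ _ _ (hnone.mp hψ)
    | seq_fail2 _ _ _ _ m hψ hβ => exact Eval.seq_succ _ _ _ _ _ (hsome m hψ) hβ
  · cases hα with
    | seq_succ _ _ _ _ _ hα hβ =>
      obtain ⟨p, rfl, hψ⟩ := hmatch _ hα
      exact AEval.seq_fail2 _ _ _ _ p hψ hβ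
    | seq_fail _ _ _ hα => exact AEval.seq_fail1 _ _ _ _ (hnone.mpr hα)
  · cases hψ with
    | seq_succ _ _ _ _ m _ hψ hβ =>
      rw [drop_eq hβ]
      exact Eval.seq_succ _ _ _ _ _ (hsome m hψ) hβ
  · cases hα with
    | seq_succ _ _ _ _ _ hα hβ =>
      obtain ⟨p, rfl, hψ⟩ := hmatch _ hα
      exact ⟨_, (drop_eq hβ).symm, AEval.seq_succ _ _ _ _ _ _ hψ hβ⟩

theorem alt {ψ χ : AExp N σ} {α β : PExp N σ} (hα : SemEquiv R w k ψ α)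
    (hβ : SemEquiv R w k χ β) : SemEquiv R w k (.alt ψ χ) (.alt α β) := by
  obtain ⟨hnoneα, hsomeα, hmatchα⟩ := hα
  obtain ⟨hnoneβ, hsomeβ, hmatchβ⟩ := hβ
  refine ⟨⟨fun hψχ => ?_, fun hαβ => ?_⟩, fun p hψχ => ?_, fun s' hαβ => ?_⟩
  · cases hψχ with
    | alt_fail _ _ _ _ hψ hχ => exact Eval.alt_fail _ _ _ _ (hnoneα.mp hψ) (hnoneβ.mp hχ)
  · cases hαβ with
    | alt_fail _ _ _ _ hα hβ => exact AEval.alt_fail _ _ _ _ (hnoneα.mpr hα) (hnoneβ.mpr hβ)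
  · cases hψχ with
    | alt_succ _ _ _ _ hψ => exact Eval.alt_succ _ _ _ _ (hsomeα p hψ)
    | alt_fail _ _ _ _ hψ hχ => exact Eval.alt_fail _ _ _ _ (hnoneα.mp hψ) (hsomeβ p hχ)
  · cases hαβ with
    | alt_succ _ _ _ _ hα =>
      obtain ⟨p, rfl, hψ⟩ := hmatchα _ hα
      exact ⟨p, rfl, AEval.alt_succ _ _ _ _ hψ⟩
    | alt_fail _ _ _ _ hα hβ =>
      obtain ⟨p, rfl, hχ⟩ := hmatchβ _ hβ
      exact ⟨p, rfl, AEval.alt_fail _ _ _ _ (hnoneα.mpr hα) hχ⟩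

end SemEquiv

theorem Norm.semEquiv {k : ℕ} {φ : PExp N σ} {ψ : AExp N σ} (hn : Norm R k φ ψ) (w : List σ) :
    SemEquiv R w k ψ φ := by
  induction hn with
  | chr a => exact .chr a
  | eps => exact .eps
  | fail => exact .fail
  | nt A _ _ ih => exact .nt A ih
  | neg _ _ _ ih => exact .neg ih
  | seq_lam _ β _ _ _ _ _ ih => exact .seq β _ ih
  | seq_nolam _ β _ _ _ ih => exact .seq β _ ih
  | alt _ _ _ _ _ _ ihα ihβ => exact .alt ihα ihβ

end PEG

theorem norm_semantics_general {N σ : Type} (R : N → PEG.PExp N σ) (φ : PEG.PExp N σ)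
    (ψ : PEG.AExp N σ) (k : ℕ) (w : List σ)
    (hn : PEG.Norm R k φ ψ) :
    (PEG.AEval R w ψ k none ↔ PEG.Eval R φ (w.drop k) none) ∧
    (∀ p, PEG.AEval R w ψ k (some p) → PEG.Eval R φ (w.drop k) (some (w.drop p))) ∧
    (∀ s', PEG.Eval R φ (w.drop k) (some s') →
      ∃ p, s' = w.drop p ∧ PEG.AEval R w ψ k (some p)) :=
  hn.semEquiv w

/-- normalization preserves semantics: for any well-formed
(un-normalized) φ and string s = s_{k+1}…s_{k+n} (the suffix of the full input
w after index k), φ(s) = [φ]_k(s). -/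
theorem norm_semantics {N σ : Type} (R : N → PEG.PExp N σ) (φ : PEG.PExp N σ)
    (ψ : PEG.AExp N σ) (k : ℕ) (w : List σ)
    (hwf : PEG.WellFormed R φ) (hn : PEG.Norm R k φ ψ) :
    (PEG.AEval R w ψ k none ↔ PEG.Eval R φ (w.drop k) none) ∧
    (∀ p, PEG.AEval R w ψ k (some p) → PEG.Eval R φ (w.drop k) (some (w.drop p))) ∧
    (∀ s', PEG.Eval R φ (w.drop k) (some s') →
      ∃ p, s' = w.drop p ∧ PEG.AEval R w ψ k (some p)) :=
  norm_semantics_general R φ ψ k w hn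
end

section
/- For any well-formed, un-normalized parsing expression φ and index i, back([φ]_i) ⊆ {i}. -/
namespace PEG

variable {N σ : Type}

theorem BackMem.seq_iff {α : AExp N σ} {β : PExp N σ} {fs : List (ℕ × AExp N σ)} {m : ℕ} :
    BackMem (.seq α β fs) m ↔ ∃ j γ, (j, γ) ∈ fs ∧ BackMem γ m := by
  constructor
  · rintro (_ | _ | ⟨_, _, _, j, γ, _, hmem, hγ⟩)
    exact ⟨j, γ, hmem, hγ⟩
  · rintro ⟨j, γ, hmem, hγ⟩
    exact .seq α β fs j γ m hmem hγ

theorem BackMem.alt_iff {α β : AExp N σ} {m : ℕ} :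
    BackMem (.alt α β) m ↔ BackMem α m ∨ BackMem β m := by
  constructor
  · rintro (_ | _ | _ | ⟨_, _, _, h⟩ | ⟨_, _, _, h⟩)
    exacts [.inl h, .inr h]
  · rintro (h | h)
    exacts [.altl α β m h, .altr α β m h]

/-- Normalization at `i` produces annotations `ε_i` and `!_i` only, and the followers it
creates are themselves normalizations at `i`. -/
theorem Norm.eq_of_backMem {R : N → PExp N σ} {i : ℕ} {φ : PExp N σ} {ψ : AExp N σ}
    (hn : Norm R i φ ψ) {j : ℕ} (hj : BackMem ψ j) : j = i := by
  induction hn generalizing j with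
  | chr => cases hj
  | eps => cases hj; rfl
  | fail => cases hj
  | nt _ _ _ ih => exact ih hj
  | neg => cases hj; rfl
  | seq_lam _ _ _ _ _ _ _ _ ihβ =>
    obtain ⟨_, _, hmem, hγ⟩ := BackMem.seq_iff.mp hj
    obtain ⟨-, rfl⟩ := Prod.mk.inj (List.mem_singleton.mp hmem)
    exact ihβ hγ
  | seq_nolam =>
    obtain ⟨_, _, hmem, -⟩ := BackMem.seq_iff.mp hj
    cases hmem
  | alt _ _ _ _ _ _ ihα ihβ => exact (BackMem.alt_iff.mp hj).elim ihα ihβ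

end PEG

theorem back_norm_subset_general {N σ : Type} (R : N → PEG.PExp N σ) (φ : PEG.PExp N σ)
    (ψ : PEG.AExp N σ) (i : ℕ) (hn : PEG.Norm R i φ ψ) :
    {j | PEG.BackMem ψ j} ⊆ ({i} : Set ℕ) :=
  fun _ hj => hn.eq_of_backMem hj

/-- for any well-formed un-normalized φ and index i,
back([φ]_i) ⊆ {i}. -/
theorem back_norm_subset {N σ : Type} (R : N → PEG.PExp N σ) (φ : PEG.PExp N σ)
    (ψ : PEG.AExp N σ) (i : ℕ) (hwf : PEG.WellFormed R φ) (hn : PEG.Norm R i φ ψ) :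
    {j | PEG.BackMem ψ j} ⊆ ({i} : Set ℕ) :=
  back_norm_subset_general R φ ψ i hn
end

section
/- For any normalized parsing expression φ, the set match(φ) has cardinality at most 1. -/
namespace PEG

variable {N σ : Type}

theorem ANorm.matchMem_unique {R : N → PExp N σ} {φ : AExp N σ} (hn : ANorm R φ) :
    ∀ {i j : ℕ}, MatchMem φ i → MatchMem φ j → i = j := by
  induction hn with
  | chr | fail | neg => rintro _ _ ⟨⟩
  | eps => rintro _ _ ⟨⟩ ⟨⟩; rfl
  | seq _ _ _ _ _ _ hfun ihα ihfs =>
    intro _ _ hi hj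
    cases hi with | seq _ _ _ j γ _ hαj hγ hγi => ?_
    cases hj with | seq _ _ _ j' γ' _ hαj' hγ' hγj => ?_
    obtain rfl : j = j' := ihα hαj hαj'
    obtain rfl : γ = γ' := hfun j γ γ' hγ hγ'
    exact ihfs (j, γ) hγ hγi hγj
  | alt _ _ _ _ _ ihβ =>
    intro _ _ hi hj
    cases hi with | alt _ _ _ hβi => ?_
    cases hj with | alt _ _ _ hβj => exact ihβ hβi hβj

end PEG

/-- for any normalized parsing expression φ, the set match(φ)
has cardinality at most 1. -/
theorem match_subsingleton {N σ : Type} (R : N → PEG.PExp N σ) (φ : PEG.AExp N σ)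
    (hn : PEG.ANorm R φ) :
    Set.Subsingleton {j | PEG.MatchMem φ j} :=
  fun _ hi _ hj => hn.matchMem_unique hi hj
end

section
/- For any (i−1)-normalized expression φ, back(d_{c,i}(φ)) ⊆ back(φ) ∪ {i}. -/
/-!
Induction on the derivation of `d_{c,i}(φ)`. The only new backtracking index a derivative
step can create is `i` itself: it enters through `ε_i` and through the normalized follower
`[β]_i`. The remaining followers of `d_{c,i}(αβ)` sit at indices `j ∈ back(d_{c,i}(α))`,
`j ≠ i`; by induction `j ∈ back(α)`, so `j < i` because no index of `φ` exceeds `i`, and such a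
follower is the derivative of the old follower at `j`.
-/

namespace PEG

variable {N σ : Type}

def back (φ : AExp N σ) : Set ℕ := {j | BackMem φ j}

section back

variable {α β : AExp N σ} {B : PExp N σ} {fs : List (ℕ × AExp N σ)} {a : σ} {j m : ℕ}

@[simp] lemma not_mem_back_chr : m ∉ back (.chr a : AExp N σ) := nofun

@[simp] lemma not_mem_back_fail : m ∉ back (.fail : AExp N σ) := nofun

@[simp] lemma mem_back_eps : m ∈ back (.eps j : AExp N σ) ↔ m = j :=
  ⟨by rintro ⟨⟩; rfl, by rintro rfl; exact .eps _⟩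

@[simp] lemma mem_back_neg : m ∈ back (.neg j α) ↔ m = j :=
  ⟨by rintro ⟨⟩; rfl, by rintro rfl; exact .neg _ _⟩

@[simp] lemma mem_back_seq : m ∈ back (.seq α B fs) ↔ ∃ p ∈ fs, m ∈ back p.2 :=
  ⟨by rintro ⟨⟩; exact ⟨_, by assumption, by assumption⟩,
   by rintro ⟨⟨j, γ⟩, hp, hm⟩; exact .seq _ _ _ j γ m hp hm⟩

@[simp] lemma mem_back_alt : m ∈ back (.alt α β) ↔ m ∈ back α ∨ m ∈ back β :=
  ⟨fun h => by cases h with | altl _ _ _ h => exact .inl h | altr _ _ _ h => exact .inr h,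
   by rintro (h | h); exacts [.altl _ _ _ h, .altr _ _ _ h]⟩

lemma back_alt (α β : AExp N σ) : back (.alt α β) = back α ∪ back β :=
  Set.ext fun _ => mem_back_alt

lemma back_subset_back_seq {γ : AExp N σ} (h : (j, γ) ∈ fs) : back γ ⊆ back (.seq α B fs) :=
  fun _ hm => mem_back_seq.2 ⟨_, h, hm⟩

end back

lemma IdxLE.mono {k k' : ℕ} (hk : k ≤ k') {φ : AExp N σ} (h : IdxLE k φ) : IdxLE k' φ := by
  induction h with
  | chr => exact .chr _
  | eps _ hj => exact .eps _ (hj.trans hk)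
  | fail => exact .fail
  | neg _ _ hj _ ih => exact .neg _ _ (hj.trans hk) ih
  | seq _ _ _ _ hfs _ ihα ihfs => exact .seq _ _ _ ihα (fun p hp => (hfs p hp).trans hk) ihfs
  | alt _ _ _ _ ihα ihβ => exact .alt _ _ ihα ihβ

lemma IdxLE.back_subset {k : ℕ} {φ : AExp N σ} (h : IdxLE k φ) : back φ ⊆ Set.Iic k := by
  induction h <;> intro m <;> aesop

lemma Norm.idxLE {R : N → PExp N σ} {i : ℕ} {β : PExp N σ} {χ : AExp N σ}
    (h : Norm R i β χ) : IdxLE i χ := by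
  induction h with
  | chr => exact .chr _
  | eps => exact .eps _ le_rfl
  | fail => exact .fail
  | nt _ _ _ ih => exact ih
  | neg _ _ _ ih => exact .neg _ _ le_rfl ih
  | seq_lam _ _ _ _ _ _ _ ihα ihβ => exact .seq _ _ _ ihα (by simp) (by simpa using ihβ)
  | seq_nolam _ _ _ _ _ ihα => exact .seq _ _ _ ihα (by simp) (by simp)
  | alt _ _ _ _ _ _ ihα ihβ => exact .alt _ _ ihα ihβ

lemma Norm.back_subset {R : N → PExp N σ} {i : ℕ} {β : PExp N σ} {χ : AExp N σ}
    (h : Norm R i β χ) : back χ ⊆ {i} := by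
  induction h <;> intro m <;> aesop

lemma Deriv.back_subset {R : N → PExp N σ} {c : Option σ} {i : ℕ} {φ ψ : AExp N σ}
    (hd : Deriv R c i φ ψ) (hφ : IdxLE i φ) : back ψ ⊆ back φ ∪ {i} := by
  induction hd with
  | chr_eq | chr_ne | eps | fail | neg_match | neg_fail | neg_other | seq_fail =>
    intro m; simp_all
  | seq_eps_i _ _ _ _ _ _ _ hβ => exact hβ.back_subset.trans Set.subset_union_right
  | seq_eps_i_end i _ _ _ _ _ _ hβ _ _ ihχ =>
    have hχ : back _ ∪ {i} ⊆ {i} := Set.union_subset hβ.back_subset le_rfl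
    exact (ihχ hβ.idxLE).trans (hχ.trans Set.subset_union_right)
  | seq_eps_j _ _ _ _ _ _ _ _ _ _ hγ _ _ ihγ =>
    cases hφ with | seq _ _ _ _ _ hfs =>
    exact (ihγ (hfs _ hγ)).trans (Set.union_subset_union_left _ (back_subset_back_seq hγ))
  | seq_other _ i _ _ _ α' fs' _ _ _ hback' _ hnorm' hold _ ihα ihfs =>
    cases hφ with | seq _ _ _ hα _ hfs =>
    intro m hm
    obtain ⟨⟨j, γ'⟩, hjγ', hm⟩ := mem_back_seq.1 hm
    rcases eq_or_ne j i with rfl | hji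
    · exact .inr ((hnorm' γ' hjγ').back_subset hm)
    have hjα' : j ∈ back α' := (hback' j).1 ⟨γ', hjγ'⟩
    have hji : j < i := (hα.back_subset ((ihα hα hjα').resolve_right hji)).lt_of_ne hji
    obtain ⟨γ, hjγ⟩ := hold j hji ⟨γ', hjγ'⟩
    exact Set.union_subset_union_left _ (back_subset_back_seq hjγ)
      (ihfs j γ γ' hji hjγ hjγ' (hfs _ hjγ) hm)
  | alt_fail_l _ _ _ _ _ _ _ _ _ ih =>
    cases hφ with | alt _ _ _ hβ =>
    rw [back_alt]
    exact (ih hβ).trans (Set.union_subset_union_left _ Set.subset_union_right)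
  | alt_take_l_match _ _ _ _ _ _ _ _ _ ih | alt_take_l_bfail _ _ _ _ _ _ _ _ ih _ =>
    cases hφ with | alt _ _ hα _ =>
    rw [back_alt]
    exact (ih hα).trans (Set.union_subset_union_left _ Set.subset_union_left)
  | alt_other _ _ _ _ _ _ _ _ _ _ _ ihα ihβ =>
    cases hφ with | alt _ _ hα hβ =>
    rw [back_alt, back_alt, Set.union_union_distrib_right]
    exact Set.union_subset_union (ihα hα) (ihβ hβ)

end PEG

/-- for any (i−1)-normalized expression φ (here with i = i'+1),
back(d_{c,i}(φ)) ⊆ back(φ) ∪ {i}. -/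
theorem deriv_back_subset {N σ : Type} (R : N → PEG.PExp N σ)
    (c : Option σ) (i' : ℕ) (φ ψ : PEG.AExp N σ)
    (hn : PEG.KNorm R i' φ) (hd : PEG.Deriv R c (i'+1) φ ψ) :
    {j | PEG.BackMem ψ j} ⊆ {j | PEG.BackMem φ j} ∪ {i'+1} :=
  hd.back_subset (hn.2.mono i'.le_succ)
end
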